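/- Let (𝒞,𝒞⊥) be a complete cotorsion pair in ℰ. Every morphism f : A → B with A, B ∈ 𝒞 factors as f = p ∘ i where i is a cofibration and p is an acyclic fibration. If moreover the pair is hereditary, then p may be chosen so that its kernel lies in 𝒞⊥ ∩ 𝒞, i.e. p is an acyclic fibration that is an admissible epimorphism between objects of 𝒞 with kernel in 𝒞. -/

import Mathlib

open CategoryTheory CategoryTheory.Limits

universe v u

variable {𝒜 : Type u} [Category.{v} 𝒜] [Abelian 𝒜]

/-- `(f, g)` forms a short exact sequence `0 ⟶ X ⟶ Y ⟶ Z ⟶ 0` in the ambient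
abelian category `𝒜`. -/
def IsShortExactSeq {X Y Z : 𝒜} (f : X ⟶ Y) (g : Y ⟶ Z) : Prop :=
  ∃ w : f ≫ g = 0, (ShortComplex.mk f g w).ShortExact

/-- A class of objects is closed under isomorphisms. -/
def IsoClosed (P : 𝒜 → Prop) : Prop := ∀ ⦃X Y : 𝒜⦄, (X ≅ Y) → P X → P Y

/-- `Ext¹(X, Y) = 0` relative to the exact subcategory determined by `E`:
every short exact sequence `0 ⟶ Y ⟶ M ⟶ X ⟶ 0` in `E` splits. -/
def Ext1IsZero (E : 𝒜 → Prop) (X Y : 𝒜) : Prop :=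
  ∀ ⦃M : 𝒜⦄ (f : Y ⟶ M) (g : M ⟶ X), E M → IsShortExactSeq f g →
    ∃ r : M ⟶ Y, f ≫ r = 𝟙 Y

/-- `(C, I)` is a cotorsion pair in the exact subcategory of `𝒜` determined by
the class of objects `E`: the two classes are each other's orthogonal
complement with respect to `Ext¹`. -/
structure IsCotorsionPair (E C I : 𝒜 → Prop) : Prop where
  right_eq : ∀ Y, I Y ↔ (E Y ∧ ∀ ⦃X⦄, C X → Ext1IsZero E X Y)
  left_eq : ∀ X, C X ↔ (E X ∧ ∀ ⦃Y⦄, I Y → Ext1IsZero E X Y)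

/-- The cotorsion pair `(C, I)` in `E` is complete: every object of `E` admits
both kinds of approximation sequences. -/
def IsCompleteCP (E C I : 𝒜 → Prop) : Prop :=
  (∀ A, E A → ∃ (Y P : 𝒜) (f : A ⟶ Y) (g : Y ⟶ P),
      I Y ∧ C P ∧ IsShortExactSeq f g) ∧
  (∀ A, E A → ∃ (Y P : 𝒜) (f : Y ⟶ P) (g : P ⟶ A),
      I Y ∧ C P ∧ IsShortExactSeq f g)

/-- The cotorsion pair is hereditary: `C` is closed under kernels of
admissible epimorphisms in `E`. -/
def IsHereditaryCP (E C : 𝒜 → Prop) : Prop :=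
  ∀ ⦃X Y Z : 𝒜⦄ (f : X ⟶ Y) (g : Y ⟶ Z),
    IsShortExactSeq f g → E X → C Y → C Z → C X

/-- A cofibration: an admissible monomorphism between objects of `C` whose
cokernel lies in `C`. -/
def IsCofib (C : 𝒜 → Prop) {X Y : 𝒜} (f : X ⟶ Y) : Prop :=
  C X ∧ C Y ∧ ∃ (W : 𝒜) (g : Y ⟶ W), C W ∧ IsShortExactSeq f g

/-- An acyclic fibration: an admissible epimorphism in `E` whose kernel lies
in `I`. -/
def IsAcyclicFib (E I : 𝒜 → Prop) {Y Z : 𝒜} (g : Y ⟶ Z) : Prop :=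
  E Y ∧ E Z ∧ ∃ (K : 𝒜) (k : K ⟶ Y), I K ∧ IsShortExactSeq k g

/-- An acyclic cofibration: an admissible monomorphism between objects of `C`
whose cokernel lies in `C ∩ Z`. -/
def IsAcyclicCofib (C Zc : 𝒜 → Prop) {X Y : 𝒜} (f : X ⟶ Y) : Prop :=
  C X ∧ C Y ∧ ∃ (W : 𝒜) (g : Y ⟶ W), C W ∧ Zc W ∧ IsShortExactSeq f g

/-- A weak equivalence: a morphism between objects of `C` that factors as an
acyclic cofibration followed by an acyclic fibration. -/
def IsWeakEquiv (E C I Zc : 𝒜 → Prop) {X Y : 𝒜} (f : X ⟶ Y) : Prop :=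
  C X ∧ C Y ∧ ∃ (M : 𝒜) (i : X ⟶ M) (p : M ⟶ Y),
    IsAcyclicCofib C Zc i ∧ IsAcyclicFib E I p ∧ i ≫ p = f

/-- The standing setup: a complete hereditary cotorsion pair `(Cc, Ip)` in the
exact subcategory of `𝒜` determined by the isomorphism-closed,
extension-closed class `E`, together with an isomorphism-closed class
`Zc ⊆ E` with `Ip ⊆ Zc`, such that `Zc ∩ Cc` is closed under extensions and
under cokernels of admissible monomorphisms in `Cc`. -/
structure CotorsionSetup (E Cc Ip Zc : 𝒜 → Prop) : Prop where
  isoE : IsoClosed E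
  isoC : IsoClosed Cc
  isoI : IsoClosed Ip
  isoZ : IsoClosed Zc
  extClosedE : ∀ ⦃X Y Z : 𝒜⦄ (f : X ⟶ Y) (g : Y ⟶ Z),
    IsShortExactSeq f g → E X → E Z → E Y
  cp : IsCotorsionPair E Cc Ip
  complete : IsCompleteCP E Cc Ip
  hereditary : IsHereditaryCP E Cc
  zSubE : ∀ ⦃X⦄, Zc X → E X
  iSubZ : ∀ ⦃X⦄, Ip X → Zc X
  zcExtClosed : ∀ ⦃X Y Z : 𝒜⦄ (f : X ⟶ Y) (g : Y ⟶ Z), IsShortExactSeq f g →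
    Cc X → Cc Y → Cc Z → Zc X → Zc Z → Zc Y
  zcCokerClosed : ∀ ⦃X Y Z : 𝒜⦄ (f : X ⟶ Y) (g : Y ⟶ Z), IsShortExactSeq f g →
    Cc X → Cc Y → Cc Z → Zc X → Zc Y → Zc Z

/-!
Take an approximation sequence `0 ⟶ A ⟶ I ⟶ P ⟶ 0` with `I ∈ 𝒞⊥`, `P ∈ 𝒞` and factor `f` as
`A ⟶ I ⊞ B ⟶ B` through `(j, f)` and the projection, whose kernel is `I`. The cokernel of `(j, f)`
is the pushout of `j` along `f`, an extension of `P` by `B`, so it lies in `𝒞`, and then so does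
`I ⊞ B`, an extension of it by `A`: the left class of a cotorsion pair is closed under extensions
because `Ext¹(-, Y)` vanishing is. In the hereditary case `I`, the kernel of `I ⊞ B ⟶ B`, lies in
`𝒞` as well.
-/

namespace IsShortExactSeq

variable {Y M X X₁ X₂ : 𝒜} {a : Y ⟶ M} {b : M ⟶ X}

lemma w (h : IsShortExactSeq a b) : a ≫ b = 0 := h.1

lemma shortExact (h : IsShortExactSeq a b) : (ShortComplex.mk a b h.w).ShortExact := h.2

lemma mono (h : IsShortExactSeq a b) : Mono a := h.shortExact.mono_f

lemma epi (h : IsShortExactSeq a b) : Epi b := h.shortExact.epi_g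

lemma inl_snd (X Y : 𝒜) : IsShortExactSeq (biprod.inl : X ⟶ X ⊞ Y) biprod.snd :=
  ⟨by simp, (ShortComplex.Splitting.ofHasBinaryBiproduct X Y).shortExact⟩

lemma inr_fst (X Y : 𝒜) : IsShortExactSeq (biprod.inr : Y ⟶ X ⊞ Y) biprod.fst :=
  ⟨by simp, ShortComplex.Splitting.shortExact
    { r := biprod.snd, s := biprod.inl, id := by simp [add_comm] }⟩

lemma cokernel (i : Y ⟶ M) [Mono i] : IsShortExactSeq i (cokernel.π i) :=
  ⟨_, { exact := ShortComplex.exact_cokernel i }⟩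

lemma pullback_snd (h : IsShortExactSeq a b) (s : X₁ ⟶ X) :
    IsShortExactSeq (pullback.lift a 0 (by simp [h.w])) (pullback.snd b s) := by
  have := h.mono
  have := h.epi
  have : Mono (pullback.lift a 0 (by simp [h.w]) : Y ⟶ Limits.pullback b s) :=
    mono_of_mono_fac (pullback.lift_fst _ _ _)
  refine ⟨pullback.lift_snd _ _ _, { exact := ?_ }⟩
  rw [ShortComplex.exact_iff_exact_up_to_refinements]
  intro T x (hx : x ≫ pullback.snd b s = 0)
  have hxb : (x ≫ pullback.fst b s) ≫ b = 0 := by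
    simp only [Category.assoc, pullback.condition, reassoc_of% hx, zero_comp]
  obtain ⟨y, hy⟩ : ∃ y, y ≫ a = x ≫ pullback.fst b s := ⟨_, h.shortExact.exact.lift_f _ hxb⟩
  refine ⟨T, 𝟙 T, inferInstance, y, ?_⟩
  apply pullback.hom_ext
  · dsimp
    rw [Category.id_comp, Category.assoc, pullback.lift_fst, hy]
  · dsimp
    rw [Category.id_comp, Category.assoc, pullback.lift_snd, comp_zero, hx]

variable {s : X₁ ⟶ X} {t : X ⟶ X₂}

lemma mono_comp_cokernel_π (h : IsShortExactSeq a b) [Mono s] (ℓ : X₁ ⟶ M) (hℓ : ℓ ≫ b = s) :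
    Mono (a ≫ cokernel.π ℓ) := by
  have := h.mono
  have : Mono ℓ := mono_of_mono_fac hℓ
  have hexact := (IsShortExactSeq.cokernel ℓ).shortExact.exact
  refine Preadditive.mono_of_cancel_zero _ fun z hz => ?_
  obtain ⟨u, hu⟩ : ∃ u, u ≫ ℓ = z ≫ a :=
    ⟨hexact.lift (z ≫ a) (by simpa using hz), hexact.lift_f _ _⟩
  have hu0 : u = 0 := zero_of_comp_mono s (by rw [← hℓ, reassoc_of% hu, h.w, comp_zero])
  rw [hu0, zero_comp] at hu
  exact zero_of_comp_mono a hu.symm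

lemma cokernel_of_lift (h : IsShortExactSeq a b) (hst : IsShortExactSeq s t)
    (ℓ : X₁ ⟶ M) (hℓ : ℓ ≫ b = s) :
    IsShortExactSeq (a ≫ cokernel.π ℓ)
      (cokernel.desc ℓ (b ≫ t) (by rw [reassoc_of% hℓ, hst.w])) := by
  have := h.mono
  have := h.epi
  have := hst.mono
  have := hst.epi
  have := h.mono_comp_cokernel_π ℓ hℓ
  set π := cokernel.π ℓ
  set v := cokernel.desc ℓ (b ≫ t) (by rw [reassoc_of% hℓ, hst.w])
  have hπv : π ≫ v = b ≫ t := cokernel.π_desc _ _ _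
  have : Epi v := epi_of_epi_fac hπv
  refine ⟨by simp [v, π, reassoc_of% h.w], { exact := ?_ }⟩
  rw [ShortComplex.exact_iff_exact_up_to_refinements]
  intro T x (hx : x ≫ v = 0)
  obtain ⟨T₁, ρ₁, _, m, hm⟩ := surjective_up_to_refinements_of_epi π x
  have hmbt : (m ≫ b) ≫ t = 0 := by
    rw [Category.assoc, ← hπv, ← reassoc_of% hm, hx, comp_zero]
  obtain ⟨T₂, ρ₂, _, x₁, hx₁⟩ := hst.shortExact.exact.exact_up_to_refinements _ hmbt
  have hker : (ρ₂ ≫ m - x₁ ≫ ℓ) ≫ b = 0 := by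
    simp only [Preadditive.sub_comp, Category.assoc, hℓ]
    exact sub_eq_zero.2 (by simpa using hx₁)
  obtain ⟨y, hy⟩ : ∃ y, y ≫ a = ρ₂ ≫ m - x₁ ≫ ℓ := ⟨_, h.shortExact.exact.lift_f _ hker⟩
  refine ⟨T₂, ρ₂ ≫ ρ₁, inferInstance, y, ?_⟩
  simp [π, hm, reassoc_of% hy, Preadditive.sub_comp]

end IsShortExactSeq

section CotorsionPair

variable {E : 𝒜 → Prop}

/-- Splitting the pullback along `s` lifts `s` to the middle term; the quotient by that lift is an
extension of `X₂` by `Y`, and a retraction of it is one of the original sequence. -/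
lemma Ext1IsZero.of_isShortExactSeq
    (hEext : ∀ ⦃X Y Z : 𝒜⦄ (f : X ⟶ Y) (g : Y ⟶ Z), IsShortExactSeq f g → E X → E Z → E Y)
    {X₁ X X₂ Y : 𝒜} {s : X₁ ⟶ X} {t : X ⟶ X₂} (hst : IsShortExactSeq s t)
    (hY : E Y) (hX₁ : E X₁) (hX₂ : E X₂) (h₁ : Ext1IsZero E X₁ Y) (h₂ : Ext1IsZero E X₂ Y) :
    Ext1IsZero E X Y := by
  intro M a b _ hab
  have hN := hab.pullback_snd s
  obtain ⟨r₁, hr₁⟩ := h₁ _ _ (hEext _ _ hN hY hX₁) hN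
  let σ := ShortComplex.Splitting.ofExactOfRetraction _ hN.shortExact.exact r₁ hr₁ hN.epi
  have hσ : σ.s ≫ pullback.snd b s = 𝟙 X₁ := σ.s_g
  have hℓ : (σ.s ≫ pullback.fst b s) ≫ b = s := by
    rw [Category.assoc, pullback.condition, reassoc_of% hσ]
  have hQ := hab.cokernel_of_lift hst _ hℓ
  obtain ⟨r₂, hr₂⟩ := h₂ _ _ (hEext _ _ hQ hY hX₂) hQ
  exact ⟨cokernel.π _ ≫ r₂, by rwa [← Category.assoc]⟩

variable {C I : 𝒜 → Prop}

lemma IsCotorsionPair.prop_of_left (hCI : IsCotorsionPair E C I) {X : 𝒜} (hX : C X) : E X :=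
  ((hCI.left_eq X).1 hX).1

lemma IsCotorsionPair.prop_of_right (hCI : IsCotorsionPair E C I) {Y : 𝒜} (hY : I Y) : E Y :=
  ((hCI.right_eq Y).1 hY).1

lemma IsCotorsionPair.left_of_isShortExactSeq (hCI : IsCotorsionPair E C I)
    (hEext : ∀ ⦃X Y Z : 𝒜⦄ (f : X ⟶ Y) (g : Y ⟶ Z), IsShortExactSeq f g → E X → E Z → E Y)
    {X₁ X X₂ : 𝒜} {s : X₁ ⟶ X} {t : X ⟶ X₂} (hst : IsShortExactSeq s t)
    (h₁ : C X₁) (h₂ : C X₂) : C X := by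
  obtain ⟨hE₁, hext₁⟩ := (hCI.left_eq X₁).1 h₁
  obtain ⟨hE₂, hext₂⟩ := (hCI.left_eq X₂).1 h₂
  refine (hCI.left_eq X).2 ⟨hEext _ _ hst hE₁ hE₂, fun Y hY => ?_⟩
  exact Ext1IsZero.of_isShortExactSeq hEext hst (hCI.prop_of_right hY) hE₁ hE₂
    (hext₁ hY) (hext₂ hY)

end CotorsionPair

theorem cofib_acyclicFib_factorization_general
    (E Cc Ip : 𝒜 → Prop) (hCP : IsCotorsionPair E Cc Ip)
    (hcomplete : IsCompleteCP E Cc Ip)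
    (hEext : ∀ ⦃X Y Z : 𝒜⦄ (f : X ⟶ Y) (g : Y ⟶ Z),
      IsShortExactSeq f g → E X → E Z → E Y)
    {A B : 𝒜} (f : A ⟶ B) (hA : Cc A) (hB : Cc B) :
    (∃ (M : 𝒜) (i : A ⟶ M) (p : M ⟶ B),
      IsCofib Cc i ∧ IsAcyclicFib E Ip p ∧ i ≫ p = f) ∧
    (IsHereditaryCP E Cc →
      ∃ (M : 𝒜) (i : A ⟶ M) (p : M ⟶ B),
        IsCofib Cc i ∧ IsAcyclicFib E Ip p ∧
        (∃ (K : 𝒜) (k : K ⟶ M), Ip K ∧ Cc K ∧ IsShortExactSeq k p) ∧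
        i ≫ p = f) := by
  obtain ⟨I, P, j, q, hI, hP, hjq⟩ := hcomplete.1 A (hCP.prop_of_left hA)
  have := hjq.mono
  have : Mono (biprod.lift j f) := mono_of_mono_fac (biprod.lift_fst j f)
  have hcoker := IsShortExactSeq.cokernel (biprod.lift j f)
  have hkernel := IsShortExactSeq.inl_snd I B
  have hCcoker : Cc (cokernel (biprod.lift j f)) := hCP.left_of_isShortExactSeq hEext
    ((IsShortExactSeq.inr_fst I B).cokernel_of_lift hjq _ (biprod.lift_fst j f)) hB hP
  have hCM : Cc (I ⊞ B) := hCP.left_of_isShortExactSeq hEext hcoker hA hCcoker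
  have hcofib : IsCofib Cc (biprod.lift j f) := ⟨hA, hCM, _, _, hCcoker, hcoker⟩
  have hfib : IsAcyclicFib E Ip (biprod.snd : I ⊞ B ⟶ B) :=
    ⟨hCP.prop_of_left hCM, hCP.prop_of_left hB, I, biprod.inl, hI, hkernel⟩
  refine ⟨⟨I ⊞ B, _, _, hcofib, hfib, biprod.lift_snd j f⟩, fun hher => ?_⟩
  have hCI : Cc I := hher _ _ hkernel (hCP.prop_of_right hI) hCM hB
  exact ⟨I ⊞ B, _, _, hcofib, hfib, ⟨I, biprod.inl, hI, hCI, hkernel⟩, biprod.lift_snd j f⟩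

/-- Let `(Cc, Ip)` be a complete cotorsion pair in `E`.
Every morphism `f : A ⟶ B` with `A, B ∈ Cc` factors as `f = i ≫ p` where `i`
is a cofibration and `p` is an acyclic fibration.  If moreover the pair is
hereditary, then `p` may be chosen with kernel in `Ip ∩ Cc`, i.e. `p` is an
acyclic fibration that is an admissible epimorphism between objects of `Cc`
with kernel in `Cc`. -/
theorem cofib_acyclicFib_factorization
    (E Cc Ip : 𝒜 → Prop) (hCP : IsCotorsionPair E Cc Ip)
    (hcomplete : IsCompleteCP E Cc Ip)
    (hEiso : IsoClosed E) (hCiso : IsoClosed Cc) (hIiso : IsoClosed Ip)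
    (hEext : ∀ ⦃X Y Z : 𝒜⦄ (f : X ⟶ Y) (g : Y ⟶ Z),
      IsShortExactSeq f g → E X → E Z → E Y)
    {A B : 𝒜} (f : A ⟶ B) (hA : Cc A) (hB : Cc B) :
    (∃ (M : 𝒜) (i : A ⟶ M) (p : M ⟶ B),
      IsCofib Cc i ∧ IsAcyclicFib E Ip p ∧ i ≫ p = f) ∧
    (IsHereditaryCP E Cc →
      ∃ (M : 𝒜) (i : A ⟶ M) (p : M ⟶ B),
        IsCofib Cc i ∧ IsAcyclicFib E Ip p ∧
        (∃ (K : 𝒜) (k : K ⟶ M), Ip K ∧ Cc K ∧ IsShortExactSeq k p) ∧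
        i ≫ p = f) :=
  cofib_acyclicFib_factorization_general E Cc Ip hCP hcomplete hEext f hA hB
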